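/- arXiv:1803.04220 — 7 statements merged into one kernel-verified Lean document; each statement's English description precedes it below -/
import Mathlib

section
/- Let q > 1, let n ∈ ℕ, and let φ₀ ∈ L¹(ℝ). Define φ_{m+1}(x) = φ_m(x) − q^{−(m+1)} · φ_m(x/q) for m ∈ ℕ. Then each φ_m ∈ L¹(ℝ), and for every ω ≠ 0 the Fourier transform satisfies 𝓕φ_n(ω) = (1−q)^n · ω^n · (d_q^n 𝓕φ₀)(ω), where d_q is the q-derivative and d_q^n its n-fold iterate. -/
/-!
The map `f ↦ f - q^{-(m+1)} f(·/q)` becomes, on the Fourier side, `F ↦ F - q^{-m} F(q ·)`,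
since `𝓕 (f (·/q)) ω = q 𝓕 f (q ω)`. Multiplying the induction hypothesis
`𝓕 φ_m ω = (1-q)^m ω^m G ω` at `ω` and `q ω` by the respective factors, the powers of `q` cancel
and one is left with `(1-q)^m ω^m (G ω - G (q ω)) = (1-q)^{m+1} ω^{m+1} (d_q G) ω`.
-/

open MeasureTheory

/-- The q-derivative of a function `F : ℝ → ℂ`. -/
noncomputable def qDeriv (q : ℝ) (F : ℝ → ℂ) : ℝ → ℂ :=
  fun ω => (F (q * ω) - F ω) / ((q * ω - ω : ℝ) : ℂ)

open FourierTransform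

section Fourier

variable {V E : Type*} [NormedAddCommGroup V] [InnerProductSpace ℝ V] [MeasurableSpace V]
  [BorelSpace V] [FiniteDimensional ℝ V] [NormedAddCommGroup E] [NormedSpace ℂ E]

theorem Real.fourier_sub {f g : V → E} (hf : Integrable f) (hg : Integrable g) :
    𝓕 (f - g) = 𝓕 f - 𝓕 g := by
  ext w
  simp only [Pi.sub_apply, Real.fourier_eq, smul_sub]
  exact integral_sub ((Real.fourierIntegral_convergent_iff w).2 hf)
    ((Real.fourierIntegral_convergent_iff w).2 hg)

theorem Real.fourier_const_smul (c : ℂ) (f : V → E) : 𝓕 (c • f) = c • 𝓕 f :=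
  VectorFourier.fourierIntegral_const_smul _ _ _ _ _

end Fourier

theorem Real.fourier_comp_div {E : Type*} [NormedAddCommGroup E] [NormedSpace ℂ E]
    (f : ℝ → E) {a : ℝ} (ha : a ≠ 0) (w : ℝ) :
    𝓕 (fun x => f (x / a)) w = |a| • 𝓕 f (a * w) := by
  rw [Real.fourier_real_eq, Real.fourier_real_eq, ← Measure.integral_comp_div _ a]
  congr 1 with x
  rw [show x / a * (a * w) = x * w by field_simp]

theorem one_sub_mul_mul_qDeriv (F : ℝ → ℂ) {q ω : ℝ} (hq : q ≠ 1) (hω : ω ≠ 0) :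
    ((1 - q : ℝ) : ℂ) * ω * qDeriv q F ω = F ω - F (q * ω) := by
  have hden : ((q * ω - ω : ℝ) : ℂ) ≠ 0 := by
    rw [show q * ω - ω = (q - 1) * ω by ring]
    exact_mod_cast mul_ne_zero (sub_ne_zero.2 hq) hω
  rw [qDeriv, mul_div_assoc', div_eq_iff hden]
  push_cast
  ring

theorem fourier_sub_zpow_mul_comp_div (f : ℝ → ℂ) (hf : Integrable f) {q : ℝ} (hq : 0 < q)
    (m : ℕ) (ω : ℝ) :
    𝓕 (fun x => f x - (q : ℂ) ^ (-(m + 1 : ℤ)) * f (x / q)) ω =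
      𝓕 f ω - (q : ℂ) ^ (-(m : ℤ)) * 𝓕 f (q * ω) := by
  have hf' : Integrable fun x => f (x / q) := hf.comp_div hq.ne'
  have hq' : (q : ℂ) ≠ 0 := by exact_mod_cast hq.ne'
  change 𝓕 (f - (q : ℂ) ^ (-(m + 1 : ℤ)) • fun x => f (x / q)) ω = _
  rw [Real.fourier_sub hf (hf'.smul _), Real.fourier_const_smul, Pi.sub_apply,
    Pi.smul_apply, Real.fourier_comp_div f hq.ne', abs_of_pos hq, smul_eq_mul, Complex.real_smul,
    ← mul_assoc, neg_add, zpow_add₀ hq', zpow_neg_one, inv_mul_cancel_right₀ hq']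

section Recursion

variable {q : ℝ} {φ : ℕ → ℝ → ℂ}

theorem integrable_of_recursion (hq : q ≠ 0) (h0 : Integrable (φ 0))
    (hrec : ∀ m : ℕ, ∀ x : ℝ, φ (m + 1) x = φ m x - (q : ℂ) ^ (-(m + 1 : ℤ)) * φ m (x / q))
    (m : ℕ) : Integrable (φ m) := by
  induction m with
  | zero => exact h0
  | succ m ih =>
    rw [funext (hrec m)]
    exact ih.sub ((ih.comp_div hq).const_mul _)

theorem fourier_recursion_eq_qDeriv_iterate (hq : 1 < q) (h0 : Integrable (φ 0))
    (hrec : ∀ m : ℕ, ∀ x : ℝ, φ (m + 1) x = φ m x - (q : ℂ) ^ (-(m + 1 : ℤ)) * φ m (x / q))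
    (n : ℕ) {ω : ℝ} (hω : ω ≠ 0) :
    𝓕 (φ n) ω = ((1 - q : ℝ) : ℂ) ^ n * (ω : ℂ) ^ n * ((qDeriv q)^[n] (𝓕 (φ 0))) ω := by
  have hq0 : 0 < q := by linarith
  induction n generalizing ω with
  | zero => simp
  | succ n ih =>
    set G := (qDeriv q)^[n] (𝓕 (φ 0))
    have hqc : (q : ℂ) ≠ 0 := by exact_mod_cast hq0.ne'
    have hG := one_sub_mul_mul_qDeriv G hq.ne' hω
    have hpow : (q : ℂ) ^ (-(n : ℤ)) * ((q * ω : ℝ) : ℂ) ^ n = (ω : ℂ) ^ n := by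
      rw [zpow_neg, zpow_natCast, Complex.ofReal_mul, mul_pow,
        inv_mul_cancel_left₀ (pow_ne_zero n hqc)]
    rw [funext (hrec n), fourier_sub_zpow_mul_comp_div _
        (integrable_of_recursion hq0.ne' h0 hrec n) hq0, ih hω, ih (mul_ne_zero hq0.ne' hω),
      Function.iterate_succ_apply']
    linear_combination (-((1 - q : ℝ) : ℂ) ^ n * (ω : ℂ) ^ n) * hG
      - ((1 - q : ℝ) : ℂ) ^ n * G (q * ω) * hpow

end Recursion

/-- the Fourier transform of the recursively defined sequence is given by
iterated q-derivatives (Proposition `Fourier`). -/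
theorem stmt_2 (q : ℝ) (hq : 1 < q) (n : ℕ) (φ₀ : ℝ → ℂ)
    (hint : Integrable φ₀)
    (φ : ℕ → ℝ → ℂ) (hφ0 : φ 0 = φ₀)
    (hrec : ∀ m : ℕ, ∀ x : ℝ, φ (m + 1) x = φ m x - (q : ℂ) ^ (-(m + 1 : ℤ)) * φ m (x / q)) :
    (∀ m : ℕ, Integrable (φ m)) ∧
    (∀ ω : ℝ, ω ≠ 0 →
      FourierTransform.fourier (φ n) ω =
        ((1 - q : ℝ) : ℂ) ^ n * (ω : ℂ) ^ n * ((qDeriv q)^[n] (FourierTransform.fourier φ₀)) ω) := by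
  subst hφ0
  exact ⟨integrable_of_recursion (by linarith) hint hrec,
    fun _ hω => fourier_recursion_eq_qDeriv_iterate hq hint hrec n hω⟩
end

section
/- Let q > 1 and let φ₀ : ℝ → ℝ be an even Schwartz function. Define φ_{m+1}(x) = φ_m(x) − q^{−(m+1)} · φ_m(x/q) for m ∈ ℕ. Then each φ_m is a Schwartz function, and for every m ∈ ℕ and every ℓ ∈ {0,…,m−1} one has ∫_0^∞ φ_m(x) x^ℓ dx = 0 and ∫_{−∞}^0 φ_m(x) x^ℓ dx = 0. -/
open MeasureTheory Set

private lemma int_pow_aux (Ψ : SchwartzMap ℝ ℝ) (ℓ : ℕ) :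
    Integrable (fun x : ℝ => Ψ x * x ^ ℓ) := by
  refine (Ψ.integrable_pow_mul volume ℓ).mono'
    ((Ψ.continuous.mul (continuous_pow ℓ)).aestronglyMeasurable) ?_
  filter_upwards with x
  rw [norm_mul, norm_pow, mul_comm]

private lemma schwartz_dilate (q : ℝ) (hq : q ≠ 0) (Φ : SchwartzMap ℝ ℝ) :
    ∃ Ψ : SchwartzMap ℝ ℝ, ⇑Ψ = fun x => Φ (x / q) := by
  let e : ℝ ≃L[ℝ] ℝ :=
    (LinearEquiv.smulOfNeZero ℝ ℝ q⁻¹ (inv_ne_zero hq)).toContinuousLinearEquiv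
  refine ⟨SchwartzMap.compCLMOfContinuousLinearEquiv ℝ e Φ, ?_⟩
  ext x
  simp only [SchwartzMap.compCLMOfContinuousLinearEquiv_apply, Function.comp_apply]
  congr 1
  show q⁻¹ • x = x / q
  rw [smul_eq_mul, div_eq_inv_mul]

private lemma sub_Ioi (q : ℝ) (hq : 0 < q) (g : ℝ → ℝ) :
    (∫ x in Ioi (0 : ℝ), g (x / q)) = q * ∫ x in Ioi (0 : ℝ), g x := by
  have h := integral_comp_mul_left_Ioi g 0 (inv_pos.mpr hq)
  simp only [mul_zero, inv_inv, smul_eq_mul] at h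
  simp_rw [div_eq_inv_mul]
  exact h

private lemma sub_Iio (q : ℝ) (hq : 0 < q) (g : ℝ → ℝ) :
    (∫ x in Iio (0 : ℝ), g (x / q)) = q * ∫ x in Iio (0 : ℝ), g x := by
  rw [← integral_Iic_eq_integral_Iio, ← integral_Iic_eq_integral_Iio]
  have h1 : (∫ x in Iic (0 : ℝ), g (x / q)) = ∫ x in Ioi (0 : ℝ), g (-x / q) := by
    rw [show (0 : ℝ) = -0 by ring, ← integral_comp_neg_Iic (0 : ℝ) (fun x => g (-x / q))]
    simp
  have h2 : (∫ x in Iic (0 : ℝ), g x) = ∫ x in Ioi (0 : ℝ), g (-x) := by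
    rw [show (0 : ℝ) = -0 by ring, ← integral_comp_neg_Iic (0 : ℝ) (fun x => g (-x))]
    simp
  rw [h1, h2]
  have := sub_Ioi q hq (fun x => g (-x))
  simp only [neg_div] at this ⊢
  exact this

/-- each `φ_m` is Schwartz and has `m` one-sided vanishing moments
(Lemma `vanmom`). -/
theorem stmt_3 (q : ℝ) (hq : 1 < q) (φ₀ : SchwartzMap ℝ ℝ)
    (hEven : ∀ x : ℝ, φ₀ (-x) = φ₀ x)
    (φ : ℕ → ℝ → ℝ) (hφ0 : φ 0 = ⇑φ₀)
    (hrec : ∀ m : ℕ, ∀ x : ℝ, φ (m + 1) x = φ m x - q ^ (-(m + 1 : ℤ)) * φ m (x / q)) :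
    ∀ m : ℕ, (∃ Φ : SchwartzMap ℝ ℝ, ⇑Φ = φ m) ∧
      ∀ ℓ : ℕ, ℓ < m →
        (∫ x in Set.Ioi (0 : ℝ), φ m x * x ^ ℓ = 0) ∧
        (∫ x in Set.Iio (0 : ℝ), φ m x * x ^ ℓ = 0) := by
  have hq0 : (0 : ℝ) < q := lt_trans one_pos hq
  have hqne : q ≠ 0 := ne_of_gt hq0
  intro m
  induction m with
  | zero => exact ⟨⟨φ₀, hφ0.symm⟩, fun ℓ hℓ => absurd hℓ (Nat.not_lt_zero ℓ)⟩
  | succ m ih =>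
    obtain ⟨⟨Φ, hΦ⟩, hmom⟩ := ih
    obtain ⟨Ψ, hΨ⟩ := schwartz_dilate q hqne Φ
    -- the new Schwartz map
    have hnew : ∀ x, φ (m + 1) x = (Φ - q ^ (-(m + 1 : ℤ)) • Ψ) x := by
      intro x
      rw [hrec m x]
      simp [hΦ, hΨ, SchwartzMap.sub_apply, SchwartzMap.smul_apply, smul_eq_mul]
    refine ⟨⟨Φ - q ^ (-(m + 1 : ℤ)) • Ψ, funext fun x => (hnew x).symm⟩, ?_⟩
    intro ℓ hℓ
    have hℓm : ℓ ≤ m := Nat.lt_succ_iff.mp hℓ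
    -- integrability
    have hint1 : Integrable (fun x : ℝ => φ m x * x ^ ℓ) := by
      simpa [hΦ] using int_pow_aux Φ ℓ
    have hint2 : Integrable (fun x : ℝ => φ m (x / q) * x ^ ℓ) := by
      have := int_pow_aux Ψ ℓ
      simpa [hΨ, hΦ] using this
    have hpowq : q ^ (-(m + 1 : ℤ)) * (q * q ^ ℓ) = q ^ ((ℓ : ℤ) - m) := by
      rw [show q * q ^ ℓ = q ^ ((ℓ : ℤ) + 1) by
            rw [zpow_add₀ hqne, zpow_one, zpow_natCast]; ring,
          ← zpow_add₀ hqne]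
      congr 1
      ring
    -- handle the two sides uniformly
    constructor
    · -- Ioi
      have hsub : (∫ x in Ioi (0 : ℝ), φ m (x / q) * x ^ ℓ)
          = q * q ^ ℓ * ∫ x in Ioi (0 : ℝ), φ m x * x ^ ℓ := by
        have h := sub_Ioi q hq0 (fun u => φ m u * u ^ ℓ * q ^ ℓ)
        calc (∫ x in Ioi (0 : ℝ), φ m (x / q) * x ^ ℓ)
            = ∫ x in Ioi (0 : ℝ), φ m (x / q) * (x / q) ^ ℓ * q ^ ℓ := by
              congr 1; ext x; rw [div_pow, mul_assoc, div_mul_cancel₀]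
              positivity
          _ = q * ∫ x in Ioi (0 : ℝ), φ m x * x ^ ℓ * q ^ ℓ := h
          _ = q * q ^ ℓ * ∫ x in Ioi (0 : ℝ), φ m x * x ^ ℓ := by
              rw [integral_mul_const]; ring
      have hrw : (∫ x in Ioi (0 : ℝ), φ (m + 1) x * x ^ ℓ)
          = (∫ x in Ioi (0 : ℝ), φ m x * x ^ ℓ)
            - q ^ (-(m + 1 : ℤ)) * ∫ x in Ioi (0 : ℝ), φ m (x / q) * x ^ ℓ := by
        rw [← integral_const_mul, ← integral_sub hint1.restrict
          ((hint2.restrict).const_mul _)]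
        congr 1; ext x; rw [hrec m x]; ring
      rw [hrw, hsub, ← mul_assoc, hpowq]
      rcases lt_or_eq_of_le hℓm with h | h
      · rw [(hmom ℓ h).1]; ring
      · rw [h]; simp
    · -- Iio
      have hsub : (∫ x in Iio (0 : ℝ), φ m (x / q) * x ^ ℓ)
          = q * q ^ ℓ * ∫ x in Iio (0 : ℝ), φ m x * x ^ ℓ := by
        have h := sub_Iio q hq0 (fun u => φ m u * u ^ ℓ * q ^ ℓ)
        calc (∫ x in Iio (0 : ℝ), φ m (x / q) * x ^ ℓ)
            = ∫ x in Iio (0 : ℝ), φ m (x / q) * (x / q) ^ ℓ * q ^ ℓ := by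
              congr 1; ext x; rw [div_pow, mul_assoc, div_mul_cancel₀]
              positivity
          _ = q * ∫ x in Iio (0 : ℝ), φ m x * x ^ ℓ * q ^ ℓ := h
          _ = q * q ^ ℓ * ∫ x in Iio (0 : ℝ), φ m x * x ^ ℓ := by
              rw [integral_mul_const]; ring
      have hrw : (∫ x in Iio (0 : ℝ), φ (m + 1) x * x ^ ℓ)
          = (∫ x in Iio (0 : ℝ), φ m x * x ^ ℓ)
            - q ^ (-(m + 1 : ℤ)) * ∫ x in Iio (0 : ℝ), φ m (x / q) * x ^ ℓ := by
        rw [← integral_const_mul, ← integral_sub hint1.restrict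
          ((hint2.restrict).const_mul _)]
        congr 1; ext x; rw [hrec m x]; ring
      rw [hrw, hsub, ← mul_assoc, hpowq]
      rcases lt_or_eq_of_le hℓm with h | h
      · rw [(hmom ℓ h).2]; ring
      · rw [h]; simp
end

section
/- Let q > 1 and let φ₀ : ℝ → ℝ be a Schwartz function. Define φ_{m+1}(x) = φ_m(x) − q^{−(m+1)} · φ_m(x/q) for m ∈ ℕ. Then for all k, ℓ, m ∈ ℕ, sup_{x∈ℝ} |x^k · φ_m^{(ℓ)}(x)| ≤ exp(q^{k−ℓ}/(q−1)) · sup_{x∈ℝ} |x^k · φ₀^{(ℓ)}(x)|, where φ^{(ℓ)} denotes the ℓ-th derivative. -/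
/-!
Differentiating the recursion `ℓ` times, the dilated term contributes
`q^{-(m+1)} q^{-ℓ} x^k φ_m^{(ℓ)}(x/q) = q^{k-ℓ-(m+1)} (x/q)^k φ_m^{(ℓ)}(x/q)`, so the weighted
supremum obeys `S_{m+1} ≤ (1 + q^{k-ℓ} q^{-(m+1)}) S_m`. Since `1 + t ≤ exp t`, the product of these
factors is at most the exponential of the geometric series `q^{k-ℓ} ∑_j q^{-(j+1)} ≤ q^{k-ℓ}/(q-1)`.
-/

open Finset
open scoped ContDiff

theorem iteratedDeriv_comp_div_const {𝕜 : Type*} [NontriviallyNormedField 𝕜] {f : 𝕜 → 𝕜}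
    {ℓ : ℕ} (hf : ContDiff 𝕜 ℓ f) (q x : 𝕜) :
    iteratedDeriv ℓ (fun y => f (y / q)) x = q⁻¹ ^ ℓ * iteratedDeriv ℓ f (x / q) := by
  simp only [div_eq_inv_mul]
  exact congrFun (iteratedDeriv_comp_const_mul hf q⁻¹) x

theorem abs_pow_mul_iteratedDeriv_comp_div_const {f : ℝ → ℝ} {ℓ : ℕ} (hf : ContDiff ℝ ℓ f)
    {q : ℝ} (hq : 0 < q) (k : ℕ) (x : ℝ) :
    |x ^ k * iteratedDeriv ℓ (fun y => f (y / q)) x|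
      = q ^ ((k : ℤ) - ℓ) * |(x / q) ^ k * iteratedDeriv ℓ f (x / q)| := by
  have hscale : x ^ k * q⁻¹ ^ ℓ = q ^ ((k : ℤ) - ℓ) * (x / q) ^ k := by
    rw [zpow_sub₀ hq.ne', zpow_natCast, zpow_natCast, div_pow, inv_pow]
    field_simp
  rw [iteratedDeriv_comp_div_const hf, ← mul_assoc, hscale, mul_assoc, abs_mul,
    abs_of_pos (zpow_pos hq _)]

theorem abs_pow_mul_iteratedDeriv_sub_dilate_le {f : ℝ → ℝ} {ℓ : ℕ} (hf : ContDiff ℝ ℓ f)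
    {q : ℝ} (hq : 0 < q) (c : ℝ) (k : ℕ) (x : ℝ) :
    |x ^ k * iteratedDeriv ℓ (fun y => f y - c * f (y / q)) x|
      ≤ |x ^ k * iteratedDeriv ℓ f x|
        + |c| * q ^ ((k : ℤ) - ℓ) * |(x / q) ^ k * iteratedDeriv ℓ f (x / q)| := by
  have hdil : ContDiff ℝ ℓ fun y => f (y / q) := hf.comp (contDiff_id.div_const q)
  rw [iteratedDeriv_fun_sub hf.contDiffAt (contDiff_const.mul hdil).contDiffAt,
    iteratedDeriv_const_mul_field, mul_sub, mul_left_comm, mul_assoc,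
    ← abs_pow_mul_iteratedDeriv_comp_div_const hf hq, ← abs_mul]
  exact abs_sub _ _

theorem bddAbove_and_ciSup_le_one_add_mul {α : Type*} [Nonempty α] {G H : α → ℝ} {c : ℝ}
    (σ : α → α) (hc : 0 ≤ c) (hH : BddAbove (Set.range H)) (h : ∀ x, G x ≤ H x + c * H (σ x)) :
    BddAbove (Set.range G) ∧ ⨆ x, G x ≤ (1 + c) * ⨆ x, H x := by
  have hG : ∀ x, G x ≤ (1 + c) * ⨆ x, H x := fun x =>
    calc G x ≤ H x + c * H (σ x) := h x
      _ ≤ (⨆ x, H x) + c * ⨆ x, H x := by gcongr <;> exact le_ciSup hH _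
      _ = (1 + c) * ⨆ x, H x := by ring
  exact ⟨⟨_, Set.forall_mem_range.2 hG⟩, ciSup_le hG⟩

theorem prod_one_add_mul_pow_succ_le_exp {a r : ℝ} (ha : 0 ≤ a) (hr₀ : 0 ≤ r) (hr₁ : r < 1)
    (m : ℕ) : ∏ j ∈ range m, (1 + a * r ^ (j + 1)) ≤ Real.exp (a * r / (1 - r)) := by
  have hgeom : ∑ j ∈ range m, r ^ j ≤ 1 / (1 - r) := by
    simpa [← range_eq_Ico] using geom_sum_Ico_le_of_lt_one (m := 0) (n := m) hr₀ hr₁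
  calc ∏ j ∈ range m, (1 + a * r ^ (j + 1))
      ≤ Real.exp (∑ j ∈ range m, a * r ^ (j + 1)) :=
        Real.prod_one_add_le_exp_sum _ fun j => by positivity
    _ = Real.exp (a * r * ∑ j ∈ range m, r ^ j) := by
        simp only [mul_sum, pow_succ', mul_assoc]
    _ ≤ Real.exp (a * r / (1 - r)) := by
        gcongr
        rw [← mul_one_div]
        exact mul_le_mul_of_nonneg_left hgeom (by positivity)

section Sequence

variable {q : ℝ} {φ : ℕ → ℝ → ℝ}
  (hrec : ∀ m : ℕ, ∀ x : ℝ, φ (m + 1) x = φ m x - q ^ (-(m + 1 : ℤ)) * φ m (x / q))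
include hrec

theorem contDiff_of_dilation_rec (h0 : ContDiff ℝ ∞ (φ 0)) (n : ℕ) : ContDiff ℝ ∞ (φ n) := by
  induction n with
  | zero => exact h0
  | succ n ih =>
    rw [funext (hrec n)]
    exact ih.sub (contDiff_const.mul (ih.comp (contDiff_id.div_const q)))

theorem bddAbove_and_ciSup_le_prod_of_dilation_rec (hq : 0 < q)
    (hsmooth : ∀ n, ContDiff ℝ ∞ (φ n)) {k ℓ : ℕ}
    (h0 : BddAbove (Set.range fun x => |x ^ k * iteratedDeriv ℓ (φ 0) x|)) (m : ℕ) :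
    BddAbove (Set.range fun x => |x ^ k * iteratedDeriv ℓ (φ m) x|) ∧
      (⨆ x, |x ^ k * iteratedDeriv ℓ (φ m) x|)
        ≤ (∏ j ∈ range m, (1 + q ^ ((k : ℤ) - ℓ) * q⁻¹ ^ (j + 1)))
          * ⨆ x, |x ^ k * iteratedDeriv ℓ (φ 0) x| := by
  induction m with
  | zero => simpa using h0
  | succ n ih =>
    have hcoef :
        |q ^ (-(n + 1 : ℤ))| * q ^ ((k : ℤ) - ℓ) = q ^ ((k : ℤ) - ℓ) * q⁻¹ ^ (n + 1) := by
      rw [abs_of_pos (zpow_pos hq _), mul_comm, zpow_neg, inv_pow, ← zpow_natCast,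
        Nat.cast_succ]
    have hstep := bddAbove_and_ciSup_le_one_add_mul
      (G := fun x => |x ^ k * iteratedDeriv ℓ (φ (n + 1)) x|)
      (c := q ^ ((k : ℤ) - ℓ) * q⁻¹ ^ (n + 1)) (· / q) (by positivity) ih.1 fun x => by
      rw [funext (hrec n), ← hcoef]
      exact abs_pow_mul_iteratedDeriv_sub_dilate_le (contDiff_infty.1 (hsmooth n) ℓ) hq _ k x
    refine ⟨hstep.1, hstep.2.trans ?_⟩
    rw [prod_range_succ, mul_comm _ (1 + _), mul_assoc]
    gcongr
    exact ih.2

end Sequence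

/-- uniform bounds for the Schwartz seminorms of the sequence `φ_m`. -/
theorem stmt_7 (q : ℝ) (hq : 1 < q) (φ₀ : SchwartzMap ℝ ℝ)
    (φ : ℕ → ℝ → ℝ) (hφ0 : φ 0 = ⇑φ₀)
    (hrec : ∀ m : ℕ, ∀ x : ℝ, φ (m + 1) x = φ m x - q ^ (-(m + 1 : ℤ)) * φ m (x / q)) :
    ∀ k ℓ m : ℕ,
      (⨆ x : ℝ, |x ^ k * iteratedDeriv ℓ (φ m) x|) ≤
        Real.exp (q ^ ((k : ℤ) - (ℓ : ℤ)) / (q - 1)) *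
          (⨆ x : ℝ, |x ^ k * iteratedDeriv ℓ (⇑φ₀) x|) := by
  intro k ℓ m
  have hq₀ : 0 < q := one_pos.trans hq
  have hsmooth := contDiff_of_dilation_rec hrec (hφ0 ▸ φ₀.smooth ⊤)
  have hbdd : BddAbove (Set.range fun x => |x ^ k * iteratedDeriv ℓ (φ 0) x|) :=
    ⟨SchwartzMap.seminorm ℝ k ℓ φ₀, Set.forall_mem_range.2 fun x => by
      simpa [hφ0, abs_mul] using SchwartzMap.le_seminorm' ℝ k ℓ φ₀ x⟩
  have hexp : q ^ ((k : ℤ) - ℓ) * q⁻¹ / (1 - q⁻¹) = q ^ ((k : ℤ) - ℓ) / (q - 1) := by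
    field_simp
  rw [← hφ0]
  calc (⨆ x, |x ^ k * iteratedDeriv ℓ (φ m) x|)
      ≤ (∏ j ∈ range m, (1 + q ^ ((k : ℤ) - ℓ) * q⁻¹ ^ (j + 1)))
          * ⨆ x, |x ^ k * iteratedDeriv ℓ (φ 0) x| :=
        (bddAbove_and_ciSup_le_prod_of_dilation_rec hrec hq₀ hsmooth hbdd m).2
    _ ≤ _ := by
        gcongr
        · exact Real.iSup_nonneg fun x => abs_nonneg _
        · rw [← hexp]
          exact prod_one_add_mul_pow_succ_le_exp (by positivity) (by positivity)
            (inv_lt_one_of_one_lt₀ hq) m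
end

section
/- Let q > 1 and let φ₀ : ℝ → ℝ be a Schwartz function. Define φ_{m+1}(x) = φ_m(x) − q^{−(m+1)} · φَm(x/q) for m ∈ ℕ. Then for every x ∈ ℝ, the limit lim_{m→∞} φ_m(x) exists and equals Σ_{ℓ=0}^∞ (1/∏_{k=1}^{ℓ}(1 − q^k)) · φ₀(q^{−ℓ} x), where the empty product (ℓ = 0) equals 1. -/
/-!
Unwinding the recursion gives `φ_m(x) = ∑_ℓ (-1)^ℓ e_ℓ(q⁻¹, …, q⁻ᵐ) φ₀(q^{-ℓ} x)`, where `e_ℓ` is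
the `ℓ`-th elementary symmetric function. Writing `r = q⁻¹`, the identity
`∏_{j ≤ m+1} (1 + rʲ t) = (1 + r t) ∏_{j ≤ m} (1 + rʲ (r t))` gives a second recursion
`e_ℓ(r, …, r^{m+1}) = r^ℓ (e_ℓ(r, …, rᵐ) + e_{ℓ-1}(r, …, rᵐ))`, whose fixed point is
`∏_{k ≤ ℓ} rᵏ / (1 - rᵏ) = (-1)^ℓ / (q; q)_ℓ`. It bounds `e_ℓ(r, …, rᵐ)` by that product, and as
the `e_ℓ(r, …, rᵐ)` increase with `m`, they converge to it. The products are summable in `ℓ` and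
`φ₀` is bounded, so dominated convergence lets `m → ∞` inside the series.
-/

open Filter Finset

namespace QDilation

/-- `geomEsymm r m ℓ` is the `ℓ`-th elementary symmetric function of `r, r², …, rᵐ`. -/
noncomputable def geomEsymm (r : ℝ) : ℕ → ℕ → ℝ
  | _, 0 => 1
  | 0, _ + 1 => 0
  | m + 1, ℓ + 1 => geomEsymm r m (ℓ + 1) + r ^ (m + 1) * geomEsymm r m ℓ

noncomputable def geomEsymmLimit (r : ℝ) (ℓ : ℕ) : ℝ :=
  ∏ k ∈ Icc 1 ℓ, r ^ k / (1 - r ^ k)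

variable {r : ℝ}

@[simp]
lemma geomEsymm_zero_right (m : ℕ) : geomEsymm r m 0 = 1 := by
  cases m <;> rfl

@[simp]
lemma geomEsymm_zero_succ (ℓ : ℕ) : geomEsymm r 0 (ℓ + 1) = 0 := rfl

lemma geomEsymm_succ_succ (m ℓ : ℕ) :
    geomEsymm r (m + 1) (ℓ + 1) = geomEsymm r m (ℓ + 1) + r ^ (m + 1) * geomEsymm r m ℓ := rfl

lemma geomEsymm_succ_succ_eq_pow_mul (m ℓ : ℕ) :
    geomEsymm r (m + 1) (ℓ + 1) = r ^ (ℓ + 1) * (geomEsymm r m (ℓ + 1) + geomEsymm r m ℓ) := by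
  induction m generalizing ℓ with
  | zero => cases ℓ <;> simp [geomEsymm_succ_succ]
  | succ m ih =>
    -- expand the left side with `ih`, the right side with the defining recursion
    rw [geomEsymm_succ_succ (m + 1)]
    cases ℓ with
    | zero =>
      have h₁ := ih 0
      have h₂ := geomEsymm_succ_succ (r := r) m 0
      simp only [geomEsymm_zero_right] at h₁ h₂ ⊢
      linear_combination h₁ - r * h₂
    | succ ℓ =>
      linear_combination ih (ℓ + 1) + r ^ (m + 2) * ih ℓ -
        r ^ (ℓ + 2) * (geomEsymm_succ_succ m (ℓ + 1) + geomEsymm_succ_succ m ℓ)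

lemma geomEsymm_nonneg (hr : 0 ≤ r) (m ℓ : ℕ) : 0 ≤ geomEsymm r m ℓ := by
  induction m generalizing ℓ with
  | zero => cases ℓ <;> simp
  | succ m ih =>
    cases ℓ with
    | zero => simp
    | succ ℓ => rw [geomEsymm_succ_succ]; have := ih ℓ; have := ih (ℓ + 1); positivity

lemma geomEsymm_monotone (hr : 0 ≤ r) (ℓ : ℕ) : Monotone fun m ↦ geomEsymm r m ℓ := by
  refine monotone_nat_of_le_succ fun m ↦ ?_
  cases ℓ with
  | zero => simp
  | succ ℓ =>
    rw [geomEsymm_succ_succ]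
    have := geomEsymm_nonneg hr m ℓ
    simp only [le_add_iff_nonneg_right]
    positivity

@[simp]
lemma geomEsymmLimit_zero : geomEsymmLimit r 0 = 1 := rfl

lemma geomEsymmLimit_succ (ℓ : ℕ) :
    geomEsymmLimit r (ℓ + 1) = geomEsymmLimit r ℓ * (r ^ (ℓ + 1) / (1 - r ^ (ℓ + 1))) := by
  rw [geomEsymmLimit, geomEsymmLimit, prod_Icc_succ_top (by omega)]

lemma geomEsymmLimit_succ_eq_pow_mul {ℓ : ℕ} (hr : r ^ (ℓ + 1) ≠ 1) :
    geomEsymmLimit r (ℓ + 1) = r ^ (ℓ + 1) * (geomEsymmLimit r (ℓ + 1) + geomEsymmLimit r ℓ) := by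
  have : 1 - r ^ (ℓ + 1) ≠ 0 := sub_ne_zero.2 hr.symm
  rw [geomEsymmLimit_succ]
  field_simp
  ring

lemma geomEsymmLimit_nonneg (hr₀ : 0 ≤ r) (hr₁ : r < 1) (ℓ : ℕ) : 0 ≤ geomEsymmLimit r ℓ :=
  prod_nonneg fun k _ ↦ div_nonneg (pow_nonneg hr₀ k) (sub_nonneg.2 (pow_le_one₀ hr₀ hr₁.le))

lemma pow_succ_ne_one (hr₀ : 0 ≤ r) (hr₁ : r < 1) (ℓ : ℕ) : r ^ (ℓ + 1) ≠ 1 :=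
  (pow_lt_one₀ hr₀ hr₁ ℓ.succ_ne_zero).ne

lemma geomEsymm_le_limit (hr₀ : 0 ≤ r) (hr₁ : r < 1) (m ℓ : ℕ) :
    geomEsymm r m ℓ ≤ geomEsymmLimit r ℓ := by
  induction ℓ generalizing m with
  | zero => simp
  | succ ℓ ihℓ =>
    induction m with
    | zero => simpa using geomEsymmLimit_nonneg hr₀ hr₁ (ℓ + 1)
    | succ m ihm =>
      rw [geomEsymm_succ_succ_eq_pow_mul, geomEsymmLimit_succ_eq_pow_mul (pow_succ_ne_one hr₀ hr₁ ℓ)]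
      gcongr
      exact ihℓ m

lemma tendsto_geomEsymm (hr₀ : 0 ≤ r) (hr₁ : r < 1) (ℓ : ℕ) :
    Tendsto (fun m ↦ geomEsymm r m ℓ) atTop (nhds (geomEsymmLimit r ℓ)) := by
  induction ℓ with
  | zero => simp
  | succ ℓ ih =>
    set X := ⨆ m, geomEsymm r m (ℓ + 1)
    have hX : Tendsto (fun m ↦ geomEsymm r m (ℓ + 1)) atTop (nhds X) :=
      tendsto_atTop_ciSup (geomEsymm_monotone hr₀ _)
        ⟨_, Set.forall_mem_range.2 fun m ↦ geomEsymm_le_limit hr₀ hr₁ m (ℓ + 1)⟩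
    have hfix : X = r ^ (ℓ + 1) * (X + geomEsymmLimit r ℓ) := by
      refine tendsto_nhds_unique (hX.comp (tendsto_add_atTop_nat 1)) ?_
      simpa only [Function.comp_def, geomEsymm_succ_succ_eq_pow_mul] using
        (hX.add ih).const_mul (r ^ (ℓ + 1))
    have : 1 - r ^ (ℓ + 1) ≠ 0 := sub_ne_zero.2 (pow_succ_ne_one hr₀ hr₁ ℓ).symm
    have hX_eq : X = geomEsymmLimit r (ℓ + 1) := by
      rw [geomEsymmLimit_succ]
      field_simp
      linear_combination hfix
    rwa [hX_eq] at hX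

lemma summable_geomEsymmLimit (hr₀ : 0 ≤ r) (hr₁ : r < 1) : Summable (geomEsymmLimit r) := by
  have hratio : Tendsto (fun ℓ : ℕ ↦ r ^ (ℓ + 1) / (1 - r ^ (ℓ + 1))) atTop (nhds 0) := by
    have hpow : Tendsto (fun ℓ : ℕ ↦ r ^ (ℓ + 1)) atTop (nhds 0) :=
      (tendsto_pow_atTop_nhds_zero_of_lt_one hr₀ hr₁).comp (tendsto_add_atTop_nat 1)
    simpa [Pi.div_def] using hpow.div (tendsto_const_nhds.sub hpow) (by norm_num)
  refine summable_of_ratio_norm_eventually_le (r := 1 / 2) (by norm_num) ?_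
  filter_upwards [hratio.norm.eventually (ge_mem_nhds (by norm_num : ‖(0 : ℝ)‖ < 1 / 2))]
    with ℓ hℓ
  rw [geomEsymmLimit_succ, norm_mul, mul_comm]
  exact mul_le_mul_of_nonneg_right hℓ (norm_nonneg _)

lemma hasSum_geomEsymm {f : ℝ → ℝ} {φ : ℕ → ℝ → ℝ} (h0 : φ 0 = f)
    (hrec : ∀ m x, φ (m + 1) x = φ m x - r ^ (m + 1) * φ m (r * x)) (m : ℕ) (x : ℝ) :
    HasSum (fun ℓ ↦ (-1) ^ ℓ * geomEsymm r m ℓ * f (r ^ ℓ * x)) (φ m x) := by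
  induction m generalizing x with
  | zero =>
    rw [h0]
    convert hasSum_ite_eq 0 (f x) with ℓ
    cases ℓ <;> simp
  | succ m ih =>
    rw [← hasSum_nat_add_iff' 1]
    have hshift := (hasSum_nat_add_iff' 1).2 (ih x)
    convert hshift.sub ((ih (r * x)).mul_left (r ^ (m + 1))) using 1
    · ext ℓ
      simp only [geomEsymm_succ_succ, pow_succ, mul_assoc]
      ring
    · simp [hrec, sub_right_comm]

lemma neg_one_pow_mul_geomEsymmLimit_inv {q : ℝ} (hq : 1 < q) (ℓ : ℕ) :
    (-1) ^ ℓ * geomEsymmLimit q⁻¹ ℓ = 1 / ∏ k ∈ Icc 1 ℓ, (1 - q ^ k) := by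
  induction ℓ with
  | zero => simp
  | succ ℓ ih =>
    have h₁ : 1 < q ^ (ℓ + 1) := one_lt_pow₀ hq ℓ.succ_ne_zero
    rw [geomEsymmLimit_succ, prod_Icc_succ_top (by omega), ← div_div, ← ih, pow_succ _ ℓ, inv_pow]
    generalize q ^ (ℓ + 1) = a at h₁ ⊢
    have : a ≠ 0 := by positivity
    have : 1 - a ≠ 0 := by linarith
    have : a - 1 ≠ 0 := by linarith
    field_simp
    ring

end QDilation

open QDilation in
/-- pointwise limit of the sequence `φ_m` as a series of dilates of `φ₀`
(Lemma `sum`). -/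
theorem stmt_8 (q : ℝ) (hq : 1 < q) (φ₀ : SchwartzMap ℝ ℝ)
    (φ : ℕ → ℝ → ℝ) (hφ0 : φ 0 = ⇑φ₀)
    (hrec : ∀ m : ℕ, ∀ x : ℝ, φ (m + 1) x = φ m x - q ^ (-(m + 1 : ℤ)) * φ m (x / q)) :
    ∀ x : ℝ,
      Tendsto (fun m => φ m x) atTop
        (nhds (∑' ℓ : ℕ, (1 / ∏ k ∈ Finset.Icc 1 ℓ, (1 - q ^ k)) * φ₀ (q ^ (-(ℓ : ℤ)) * x))) := by
  intro x
  have hr₀ : 0 ≤ q⁻¹ := by positivity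
  have hr₁ : q⁻¹ < 1 := inv_lt_one_of_one_lt₀ hq
  have hrec' (m : ℕ) (y : ℝ) : φ (m + 1) y = φ m y - q⁻¹ ^ (m + 1) * φ m (q⁻¹ * y) := by
    rw [hrec, ← inv_zpow', ← div_eq_inv_mul]
    norm_cast
  have hterm (ℓ : ℕ) : (1 / ∏ k ∈ Icc 1 ℓ, (1 - q ^ k)) * φ₀ (q ^ (-(ℓ : ℤ)) * x) =
      (-1) ^ ℓ * geomEsymmLimit q⁻¹ ℓ * φ₀ (q⁻¹ ^ ℓ * x) := by
    rw [← neg_one_pow_mul_geomEsymmLimit_inv hq, zpow_neg, zpow_natCast, inv_pow]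
  simp_rw [hterm, ← fun m ↦ (hasSum_geomEsymm hφ0 hrec' m x).tsum_eq]
  refine tendsto_tsum_of_dominated_convergence
    ((summable_geomEsymmLimit hr₀ hr₁).mul_right (SchwartzMap.seminorm ℝ 0 0 φ₀))
    (fun ℓ ↦ ((tendsto_geomEsymm hr₀ hr₁ ℓ).const_mul _).mul_const _)
    (Eventually.of_forall fun m ℓ ↦ ?_)
  rw [norm_mul, norm_mul, norm_pow, norm_neg, norm_one, one_pow, one_mul,
    Real.norm_of_nonneg (geomEsymm_nonneg hr₀ m ℓ)]
  exact mul_le_mul (geomEsymm_le_limit hr₀ hr₁ m ℓ) (SchwartzMap.norm_le_seminorm ℝ φ₀ _)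
    (norm_nonneg _) (geomEsymmLimit_nonneg hr₀ hr₁ ℓ)
end

section
/- For every q > 1, the series Σ_{ℓ=0}^∞ 1/∏_{k=1}^{ℓ}(1 − q^k) converges absolutely and equals ∏_{m=1}^∞ (1 − q^{−m}), where the empty product (ℓ = 0) equals 1. -/
/-!
Write `p = q⁻¹`, `a i = 1 / (q;q)_i` and `b j = 1 / (p;p)_j`. An induction on `n`, splitting
`1 - p^(i+j) = (1 - p^j) - p^(i+j) (1 - q^i)`, gives the finite identity `∑_{i+j=n} a i * b j = 1`
for every `n`. As `n → ∞`, `b (n - i) → 1 / φ(p)` with `φ(p) > 0`, and the terms are dominated by a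
constant multiple of the summable `|a i|`, so Tannery's theorem turns the identity into
`(∑ a i) / φ(p) = 1`.
-/

open Finset Filter Topology

def qPochhammer {R : Type*} [CommRing R] (q : R) (n : ℕ) : R := ∏ k ∈ Icc 1 n, (1 - q ^ k)

section Algebra

variable {R : Type*} [CommRing R]

@[simp]
theorem qPochhammer_zero (q : R) : qPochhammer q 0 = 1 := by simp [qPochhammer]

theorem qPochhammer_succ (q : R) (n : ℕ) :
    qPochhammer q (n + 1) = qPochhammer q n * (1 - q ^ (n + 1)) :=
  prod_Icc_succ_top (by omega) _

theorem qPochhammer_eq_prod_range (q : R) (n : ℕ) :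
    qPochhammer q n = ∏ m ∈ range n, (1 - q ^ (m + 1)) := by
  induction n with
  | zero => simp
  | succ n ih => rw [qPochhammer_succ, prod_range_succ, ih]

end Algebra

section Field

variable {K : Type*} [Field K] {q : K}

theorem qPochhammer_ne_zero (hq : ∀ k, 0 < k → q ^ k ≠ 1) (n : ℕ) : qPochhammer q n ≠ 0 :=
  prod_ne_zero_iff.2 fun k hk => sub_ne_zero.2 (hq k (mem_Icc.1 hk).1).symm

theorem inv_qPochhammer_succ_mul {n : ℕ} (hq : q ^ (n + 1) ≠ 1) :
    (qPochhammer q (n + 1))⁻¹ * (1 - q ^ (n + 1)) = (qPochhammer q n)⁻¹ := by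
  rw [qPochhammer_succ, mul_inv, mul_assoc, inv_mul_cancel₀ (sub_ne_zero.2 hq.symm), mul_one]

theorem sum_antidiagonal_inv_qPochhammer_mul_inv_qPochhammer_inv (hq₀ : q ≠ 0)
    (hq : ∀ k, 0 < k → q ^ k ≠ 1) (n : ℕ) :
    ∑ x ∈ antidiagonal n, (qPochhammer q x.1)⁻¹ * (qPochhammer q⁻¹ x.2)⁻¹ = 1 := by
  induction n with
  | zero => simp
  | succ n ih =>
    have hq' : ∀ k, 0 < k → q⁻¹ ^ k ≠ 1 := fun k hk => by
      rw [inv_pow, inv_ne_one]; exact hq k hk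
    apply mul_left_cancel₀ (sub_ne_zero.2 (hq' (n + 1) n.succ_pos).symm)
    set a := fun i => (qPochhammer q i)⁻¹
    set b := fun j => (qPochhammer q⁻¹ j)⁻¹
    calc (1 - q⁻¹ ^ (n + 1)) * ∑ x ∈ antidiagonal (n + 1), a x.1 * b x.2
        = ∑ x ∈ antidiagonal (n + 1), a x.1 * (b x.2 * (1 - q⁻¹ ^ x.2))
          - q⁻¹ ^ (n + 1) * ∑ x ∈ antidiagonal (n + 1), a x.1 * (1 - q ^ x.1) * b x.2 := by
          rw [mul_sum, mul_sum, ← sum_sub_distrib]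
          refine sum_congr rfl fun ⟨i, j⟩ hij => ?_
          rw [HasAntidiagonal.mem_antidiagonal] at hij
          have hinv : q⁻¹ ^ i * q ^ i = 1 := by rw [← mul_pow, inv_mul_cancel₀ hq₀, one_pow]
          rw [← hij, pow_add]
          linear_combination -(a i * b j * q⁻¹ ^ j) * hinv
      _ = ∑ x ∈ antidiagonal n, a x.1 * b x.2
          - q⁻¹ ^ (n + 1) * ∑ x ∈ antidiagonal n, a x.1 * b x.2 := by
          rw [Nat.sum_antidiagonal_succ', Nat.sum_antidiagonal_succ]
          simp only [pow_zero, sub_self, mul_zero, zero_mul, zero_add, a, b,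
            inv_qPochhammer_succ_mul (hq' _ (Nat.succ_pos _)),
            inv_qPochhammer_succ_mul (hq _ (Nat.succ_pos _))]
      _ = (1 - q⁻¹ ^ (n + 1)) * 1 := by rw [ih]; ring

end Field

theorem tendsto_sum_antidiagonal_mul_of_summable_norm {R : Type*} [NormedRing R]
    [CompleteSpace R] {a b : ℕ → R} {β : R} (ha : Summable (‖a ·‖)) (hb : Tendsto b atTop (𝓝 β)) :
    Tendsto (fun n => ∑ x ∈ antidiagonal n, a x.1 * b x.2) atTop (𝓝 ((∑' i, a i) * β)) := by
  obtain ⟨M, hM⟩ : ∃ M, ∀ j, ‖b j‖ ≤ M := by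
    obtain ⟨M, hM⟩ := isBounded_iff_forall_norm_le.1 (Metric.isBounded_range_of_tendsto b hb)
    exact ⟨M, fun j => hM _ (Set.mem_range_self j)⟩
  let f (n i : ℕ) : R := if i ≤ n then a i * b (n - i) else 0
  have hf : ∀ n, ∑ x ∈ antidiagonal n, a x.1 * b x.2 = ∑' i, f n i := fun n => by
    rw [Nat.sum_antidiagonal_eq_sum_range_succ_mk, tsum_eq_sum (s := range (n + 1))
      fun i hi => if_neg (by simpa [Nat.lt_succ_iff] using hi)]
    exact sum_congr rfl fun i hi => (if_pos (Nat.lt_succ_iff.1 (mem_range.1 hi))).symm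
  simp_rw [hf, ← ha.of_norm.tsum_mul_right]
  refine tendsto_tsum_of_dominated_convergence (ha.mul_right M) (fun i => ?_) ?_
  · refine ((hb.comp (tendsto_sub_atTop_nat i)).const_mul (a i)).congr' ?_
    filter_upwards [eventually_ge_atTop i] with n hn using (if_pos hn).symm
  · refine Eventually.of_forall fun n i => ?_
    by_cases hi : i ≤ n
    · simpa [f, hi] using norm_mul_le_of_le le_rfl (hM (n - i))
    · simpa [f, hi] using mul_nonneg (norm_nonneg (a i)) ((norm_nonneg _).trans (hM 0))

section NormedField

variable {𝕜 : Type*} [NormedField 𝕜]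

theorem pow_ne_one_of_one_lt_norm {q : 𝕜} (hq : 1 < ‖q‖) (k : ℕ) (hk : 0 < k) :
    q ^ k ≠ 1 :=
  fun h => (one_lt_pow₀ hq hk.ne').ne' (by rw [← norm_pow, h, norm_one])

theorem summable_norm_inv_qPochhammer {q : 𝕜} (hq : 1 < ‖q‖) :
    Summable fun n => ‖(qPochhammer q n)⁻¹‖ := by
  have hnorm : Tendsto (fun n => ‖1 - q ^ (n + 1)‖) atTop atTop := by
    refine tendsto_atTop_mono (fun n => ?_) (tendsto_atTop_add_const_right _ (-1)
      ((tendsto_pow_atTop_atTop_of_one_lt hq).comp (tendsto_add_atTop_nat 1)))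
    simpa [norm_sub_rev] using norm_sub_norm_le (q ^ (n + 1)) 1
  have hQ := qPochhammer_ne_zero (pow_ne_one_of_one_lt_norm hq)
  refine summable_of_ratio_test_tendsto_lt_one zero_lt_one
    (Eventually.of_forall fun n => by simpa using hQ n)
    ((tendsto_inv_atTop_zero.comp hnorm).congr fun n => ?_)
  have := norm_pos_iff.2 (hQ n)
  simp only [Function.comp_apply, norm_norm, norm_inv, qPochhammer_succ, norm_mul]
  field_simp

variable [CompleteSpace 𝕜]

theorem multipliable_one_sub_pow_succ {p : 𝕜} (hp : ‖p‖ < 1) :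
    Multipliable fun m : ℕ => 1 - p ^ (m + 1) := by
  simpa [sub_eq_add_neg] using
    multipliable_one_add_of_summable (f := fun m : ℕ => -p ^ (m + 1))
    (by simpa using (summable_nat_add_iff 1).2 (summable_geometric_of_lt_one (norm_nonneg p) hp))

theorem tendsto_qPochhammer_tprod {p : 𝕜} (hp : ‖p‖ < 1) :
    Tendsto (qPochhammer p) atTop (𝓝 (∏' m : ℕ, (1 - p ^ (m + 1)))) := by
  rw [funext (qPochhammer_eq_prod_range p)]
  exact (multipliable_one_sub_pow_succ hp).hasProd.tendsto_prod_nat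

end NormedField

theorem tprod_one_sub_pow_succ_pos {p : ℝ} (hp : |p| < 1) : 0 < ∏' m : ℕ, (1 - p ^ (m + 1)) := by
  have hlt : ∀ m : ℕ, |p ^ (m + 1)| < 1 := fun m => by
    rw [abs_pow]; exact pow_lt_one₀ (abs_nonneg p) hp m.succ_ne_zero
  rw [← Real.rexp_tsum_eq_tprod (fun m => by linarith [(abs_lt.1 (hlt m)).2])]
  · positivity
  · simpa [sub_eq_add_neg] using
      Real.summable_log_one_add_of_summable (f := fun m : ℕ => -p ^ (m + 1))
      ((summable_nat_add_iff 1).2 (summable_geometric_of_abs_lt_one hp)).neg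

/-- the series `∑ 1/(q;q)_ℓ` converges absolutely to Euler's product
`∏ (1 - q^{-m})`. -/
theorem stmt_9 (q : ℝ) (hq : 1 < q) :
    Summable (fun ℓ : ℕ => |1 / ∏ k ∈ Finset.Icc 1 ℓ, (1 - q ^ k)|) ∧
    (∑' ℓ : ℕ, 1 / ∏ k ∈ Finset.Icc 1 ℓ, (1 - q ^ k)) =
      (∏' m : ℕ, (1 - q ^ (-(m + 1) : ℤ))) := by
  have hq₁ : 1 < ‖q‖ := by rwa [Real.norm_of_nonneg (by linarith)]
  have hp : ‖q⁻¹‖ < 1 := by rw [norm_inv]; exact inv_lt_one_of_one_lt₀ hq₁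
  have hsum := summable_norm_inv_qPochhammer hq₁
  have hP := tprod_one_sub_pow_succ_pos hp
  have hlim := tendsto_sum_antidiagonal_mul_of_summable_norm hsum
    ((tendsto_qPochhammer_tprod hp).inv₀ hP.ne')
  simp_rw [sum_antidiagonal_inv_qPochhammer_mul_inv_qPochhammer_inv (by positivity)
    (pow_ne_one_of_one_lt_norm hq₁)] at hlim
  have hzpow : ∀ m : ℕ, q ^ (-(m + 1) : ℤ) = q⁻¹ ^ (m + 1) := fun m => by
    rw [inv_pow, ← zpow_natCast, ← zpow_neg]; push_cast; rfl
  refine ⟨by simpa only [Real.norm_eq_abs, one_div, qPochhammer] using hsum, ?_⟩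
  simp only [hzpow, one_div]
  exact (mul_inv_eq_one₀ hP.ne').1 (tendsto_nhds_unique hlim tendsto_const_nhds)
end

section
/- Let q > 1, ε > 0, and let η : ℝ → ℝ be such that the function φ₀ defined by φ₀(x) = 1 for |x| ≤ ε, φ₀(x) = η(|x|) for ε < |x| ≤ εq, and φ₀(x) = 0 for |x| > εq, is smooth (and hence even, smooth and compactly supported). Define φ_{m+1}(x) = φ_m(x) − q^{−(m+1)} · φ_m(x/q) for m ∈ ℕ, and let ψ(x) = lim_{m→∞} φ_m(x). Then for every x ∈ ℝ, ψ(x) = ∏_{m=1}^∞(1 − q^{−m}) + Σ_{ℓ=0}^∞ [ (1/∏_{k=1}^{ℓ}(1 − q^k)) · η(|x|/q^ℓ) − Σ_{k=0}^{ℓ} 1/∏_{j=1}^{k}(1 − q^j) ] · 1_{(εq^ℓ, εq^{ℓ+1}]}(|x|), where empty products equal 1 and 1_I denotes the indicator function of the interval I. -/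
/-! With `S f x = f (x / q)` the recursion reads `φ_{m+1} = (1 - q^{-(m+1)} S) φ_m`, so
`φ_m = ∏_{k=1}^m (1 - q^{-k} S) φ₀`, i.e. `φ_m x = ∑_j c_{m,j} φ₀ (x / q^j)`. The coefficients are
`c_{m,j} = (q;q)_j⁻¹ ∏_{i<j} (1 - q^{-(m-i)})`, which tend to `(q;q)_j⁻¹` as `m → ∞`, and
`∑_j c_{m,j}` is the partial Euler product `(q⁻¹;q⁻¹)_m`. For `|x|` in the shell
`(εq^ℓ, εq^{ℓ+1}]` the values `φ₀ (x / q^j)` are `0` for `j < ℓ`, `η (|x| / q^ℓ)` for `j = ℓ`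
and `1` for `j > ℓ`, so `φ_m x = (q⁻¹;q⁻¹)_m + c_{m,ℓ} η (|x| / q^ℓ) - ∑_{j ≤ ℓ} c_{m,j}`
once `m ≥ ℓ`, and only finitely many coefficients have to pass to the limit. -/

open Filter Function Topology Finset

namespace QDilation

section Algebra

variable {K : Type*} [Field K]

/-- The coefficient of `X ^ j` in `∏ k ∈ Icc 1 m, (1 - r ^ k * X)`. -/
def dilationCoeff (r : K) : ℕ → ℕ → K
  | 0, 0 => 1
  | 0, _ + 1 => 0
  | m + 1, 0 => dilationCoeff r m 0
  | m + 1, j + 1 => dilationCoeff r m (j + 1) - r ^ (m + 1) * dilationCoeff r m j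

theorem dilationCoeff_of_lt (r : K) {m j : ℕ} (h : m < j) : dilationCoeff r m j = 0 := by
  induction m generalizing j with
  | zero => obtain ⟨j, rfl⟩ := Nat.exists_eq_add_one_of_ne_zero (by omega : j ≠ 0); rfl
  | succ m ih =>
    obtain ⟨j, rfl⟩ := Nat.exists_eq_add_one_of_ne_zero (by omega : j ≠ 0)
    simp [dilationCoeff, ih (by omega : m < j + 1), ih (by omega : m < j)]

theorem eq_sum_dilationCoeff {r q : K} {φ : ℕ → K → K}
    (hrec : ∀ m x, φ (m + 1) x = φ m x - r ^ (m + 1) * φ m (x / q)) (m : ℕ) (x : K) :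
    φ m x = ∑ j ∈ range (m + 1), dilationCoeff r m j * φ 0 (x / q ^ j) := by
  induction m generalizing x with
  | zero => simp [dilationCoeff]
  | succ m ih =>
    have hshift : ∀ j, x / q / q ^ j = x / q ^ (j + 1) := fun j => by rw [div_div, pow_succ']
    rw [hrec, ih, ih, sum_range_succ' _ (m + 1)]
    simp only [dilationCoeff, sub_mul, sum_sub_distrib, hshift, mul_assoc]
    rw [sum_range_succ (fun k => dilationCoeff r m (k + 1) * _) m,
      dilationCoeff_of_lt r (Nat.lt_succ_self m), ← mul_sum,
      sum_range_succ' (fun j => dilationCoeff r m j * φ 0 (x / q ^ j))]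
    ring

theorem sum_dilationCoeff (r : K) (m : ℕ) :
    ∑ j ∈ range (m + 1), dilationCoeff r m j = ∏ k ∈ range m, (1 - r ^ (k + 1)) := by
  have hrec : ∀ (m : ℕ) (_ : K), ∏ k ∈ range (m + 1), (1 - r ^ (k + 1)) =
      ∏ k ∈ range m, (1 - r ^ (k + 1)) - r ^ (m + 1) * ∏ k ∈ range m, (1 - r ^ (k + 1)) :=
    fun m _ => by rw [prod_range_succ]; ring
  simpa using
    (eq_sum_dilationCoeff (φ := fun m _ => ∏ k ∈ range m, (1 - r ^ (k + 1))) (q := 1) hrec m 0).symm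

/-- For `j > m` the factor `i = m` is `1 - q⁻¹ ^ 0 = 0` by truncated subtraction, consistently
with `dilationCoeff_of_lt`. -/
theorem dilationCoeff_inv_eq {q : K} (hq : q ≠ 0) (hq1 : ∀ k, q ^ (k + 1) ≠ 1) (m j : ℕ) :
    dilationCoeff q⁻¹ m j =
      (1 / ∏ k ∈ Icc 1 j, (1 - q ^ k)) * ∏ i ∈ range j, (1 - q⁻¹ ^ (m - i)) := by
  induction m generalizing j with
  | zero => cases j <;> simp [dilationCoeff]
  | succ m ih =>
    cases j with
    | zero => simp [dilationCoeff, ih]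
    | succ j =>
      have hfactor : ∏ i ∈ range (j + 1), (1 - q⁻¹ ^ (m + 1 - i)) =
          (1 - q⁻¹ ^ (m + 1)) * ∏ i ∈ range j, (1 - q⁻¹ ^ (m - i)) := by
        rw [prod_range_succ', mul_comm]; simp
      have hj : 1 - q ^ (j + 1) ≠ 0 := sub_ne_zero.mpr (hq1 j).symm
      rw [dilationCoeff, ih, ih, hfactor, prod_range_succ, prod_Icc_succ_top (by omega)]
      rcases le_or_gt j m with hjm | hmj
      · obtain ⟨d, rfl⟩ := Nat.exists_eq_add_of_le hjm
        have hpow : q⁻¹ ^ (j + d + 1) * q ^ (j + 1) = q⁻¹ ^ d := by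
          rw [show j + d + 1 = d + (j + 1) by ring, pow_add, mul_assoc, ← mul_pow,
            inv_mul_cancel₀ hq, one_pow, mul_one]
        have hinv : (1 - q ^ (j + 1)) * (1 - q ^ (j + 1))⁻¹ = 1 := mul_inv_cancel₀ hj
        rw [show j + d - j = d by omega, ← one_div_mul_one_div]
        linear_combination (1 / ∏ k ∈ Icc 1 j, (1 - q ^ k)) *
          (∏ i ∈ range j, (1 - q⁻¹ ^ (j + d - i))) *
          ((1 - q ^ (j + 1))⁻¹ * hpow + q⁻¹ ^ (j + d + 1) * hinv)
      · have hzero : ∏ i ∈ range j, (1 - q⁻¹ ^ (m - i)) = 0 :=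
          prod_eq_zero (mem_range.mpr hmj) (by simp)
        rw [hzero]
        ring

end Algebra

theorem multipliable_one_sub_pow_succ {R : Type*} [NormedCommRing R] [NormOneClass R]
    [CompleteSpace R] {r : R} (hr : ‖r‖ < 1) : Multipliable fun k : ℕ => 1 - r ^ (k + 1) := by
  simp_rw [sub_eq_add_neg]
  refine multipliable_one_add_of_summable (Summable.of_nonneg_of_le (fun _ => norm_nonneg _)
    (fun k => (norm_neg _).trans_le (norm_pow_le r (k + 1))) ?_)
  exact (summable_nat_add_iff 1).mpr (summable_geometric_of_lt_one (norm_nonneg r) hr)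

variable {q : ℝ}

theorem tendsto_dilationCoeff_inv (hq : 1 < q) (j : ℕ) :
    Tendsto (fun m => dilationCoeff q⁻¹ m j) atTop
      (𝓝 (1 / ∏ k ∈ Icc 1 j, (1 - q ^ k))) := by
  have hq0 : q ≠ 0 := (zero_lt_one.trans hq).ne'
  have hq1 : ∀ k, q ^ (k + 1) ≠ 1 := fun k => (one_lt_pow₀ hq k.succ_ne_zero).ne'
  simp_rw [dilationCoeff_inv_eq hq0 hq1]
  have hr : q⁻¹ < 1 := inv_lt_one_of_one_lt₀ hq
  have hfactor (i : ℕ) : Tendsto (fun m => 1 - q⁻¹ ^ (m - i)) atTop (𝓝 1) := by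
    simpa using tendsto_const_nhds.sub
      ((tendsto_pow_atTop_nhds_zero_of_lt_one (by positivity) hr).comp (tendsto_sub_atTop_nat i))
  have := (tendsto_finsetProd (range j) fun i _ => hfactor i).const_mul
    (1 / ∏ k ∈ Icc 1 j, (1 - q ^ k))
  rwa [prod_const_one, mul_one] at this

theorem tendsto_sum_dilationCoeff_inv_mul (hq : 1 < q) {f : ℕ → ℝ} {ℓ : ℕ}
    (h_lt : ∀ j < ℓ, f j = 0) (h_gt : ∀ j, ℓ < j → f j = 1) :
    Tendsto (fun m => ∑ j ∈ range (m + 1), dilationCoeff q⁻¹ m j * f j) atTop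
      (𝓝 (∏' k : ℕ, (1 - q⁻¹ ^ (k + 1)) +
        ((1 / ∏ k ∈ Icc 1 ℓ, (1 - q ^ k)) * f ℓ -
          ∑ k ∈ range (ℓ + 1), 1 / ∏ i ∈ Icc 1 k, (1 - q ^ i)))) := by
  have hsplit : ∀ m, ℓ ≤ m → ∑ j ∈ range (m + 1), dilationCoeff q⁻¹ m j * f j =
      ∏ k ∈ range m, (1 - q⁻¹ ^ (k + 1)) +
        (dilationCoeff q⁻¹ m ℓ * f ℓ - ∑ k ∈ range (ℓ + 1), dilationCoeff q⁻¹ m k) := by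
    intro m hm
    rw [← sum_dilationCoeff, ← sum_range_add_sum_Ico _ (by omega : ℓ + 1 ≤ m + 1),
      ← sum_range_add_sum_Ico _ (by omega : ℓ + 1 ≤ m + 1), sum_range_succ,
      sum_eq_zero fun j hj => by rw [h_lt j (mem_range.mp hj), mul_zero],
      sum_congr rfl fun j hj => by rw [h_gt j (mem_Ico.mp hj).1, mul_one]]
    ring
  have hr : ‖q⁻¹‖ < 1 := by
    rw [Real.norm_of_nonneg (by positivity)]; exact inv_lt_one_of_one_lt₀ hq
  refine Tendsto.congr' (eventually_atTop.mpr ⟨ℓ, fun m hm => (hsplit m hm).symm⟩) ?_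
  exact (multipliable_one_sub_pow_succ hr).tendsto_prod_tprod_nat.add
    (((tendsto_dilationCoeff_inv hq ℓ).mul_const _).sub
      (tendsto_finsetSum _ fun k _ => tendsto_dilationCoeff_inv hq k))

theorem exists_mem_Ioc_mul_pow (hq : 1 < q) {ε t : ℝ} (hε : 0 < ε) (ht : ε < t) :
    ∃ ℓ : ℕ, t ∈ Set.Ioc (ε * q ^ ℓ) (ε * q ^ (ℓ + 1)) := by
  have hex : ∃ n : ℕ, t ≤ ε * q ^ n := by
    obtain ⟨n, hn⟩ := pow_unbounded_of_one_lt (t / ε) hq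
    exact ⟨n, ((div_lt_iff₀' hε).mp hn).le⟩
  obtain ⟨ℓ, hℓ⟩ := Nat.exists_eq_add_one_of_ne_zero fun h0 : Nat.find hex = 0 => by
    have := Nat.find_spec hex
    rw [h0, pow_zero, mul_one] at this
    linarith
  exact ⟨ℓ, not_le.mp (Nat.find_min hex (by omega)), hℓ ▸ Nat.find_spec hex⟩

theorem pairwise_disjoint_Ioc_mul_pow (hq : 1 ≤ q) {ε : ℝ} (hε : 0 ≤ ε) :
    Pairwise (Disjoint on fun n : ℕ => Set.Ioc (ε * q ^ n) (ε * q ^ (n + 1))) :=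
  Monotone.pairwise_disjoint_on_Ioc_succ fun _ _ hab =>
    mul_le_mul_of_nonneg_left (pow_le_pow_right₀ hq hab) hε

theorem tsum_mul_indicator_of_mem {α : Type*} {s : ℕ → Set α} (hs : Pairwise (Disjoint on s))
    (g : ℕ → ℝ) {t : α} {ℓ : ℕ} (ht : t ∈ s ℓ) :
    ∑' n, g n * (s n).indicator (fun _ => (1 : ℝ)) t = g ℓ := by
  rw [tsum_eq_single ℓ fun n hn => ?_, Set.indicator_of_mem ht, mul_one]
  rw [Set.indicator_of_notMem (Set.disjoint_left.mp (hs hn.symm) ht), mul_zero]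

theorem apply_div_pow_of_abs_mem_Ioc (hq : 1 ≤ q) {ε : ℝ} (hε : 0 ≤ ε) {η φ₀ : ℝ → ℝ}
    (hdef1 : ∀ x : ℝ, |x| ≤ ε → φ₀ x = 1)
    (hdef2 : ∀ x : ℝ, ε < |x| → |x| ≤ ε * q → φ₀ x = η |x|)
    (hdef3 : ∀ x : ℝ, ε * q < |x| → φ₀ x = 0)
    {x : ℝ} {ℓ : ℕ} (hx : |x| ∈ Set.Ioc (ε * q ^ ℓ) (ε * q ^ (ℓ + 1))) :
    (∀ j < ℓ, φ₀ (x / q ^ j) = 0) ∧ φ₀ (x / q ^ ℓ) = η (|x| / q ^ ℓ) ∧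
      ∀ j, ℓ < j → φ₀ (x / q ^ j) = 1 := by
  have hpos (j : ℕ) : 0 < q ^ j := pow_pos (zero_lt_one.trans_le hq) j
  have habs (j : ℕ) : |x / q ^ j| = |x| / q ^ j := by rw [abs_div, abs_of_pos (hpos j)]
  refine ⟨fun j hj => hdef3 _ ?_, ?_, fun j hj => hdef1 _ ?_⟩
  · rw [habs, lt_div_iff₀ (hpos j), mul_assoc, ← pow_succ']
    exact lt_of_le_of_lt (mul_le_mul_of_nonneg_left (pow_le_pow_right₀ hq hj) hε) hx.1
  · rw [← habs, hdef2 _ ?_ ?_] <;> rw [habs]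
    · rw [lt_div_iff₀ (hpos ℓ)]; exact hx.1
    · rw [div_le_iff₀ (hpos ℓ), mul_assoc, ← pow_succ']; exact hx.2
  · rw [habs, div_le_iff₀ (hpos j)]
    exact hx.2.trans (mul_le_mul_of_nonneg_left (pow_le_pow_right₀ hq hj) hε)

end QDilation

open QDilation in
theorem stmt_10_general (q : ℝ) (hq : 1 < q) (ε : ℝ) (hε : 0 < ε) (η : ℝ → ℝ) (φ₀ : ℝ → ℝ)
    (hdef1 : ∀ x : ℝ, |x| ≤ ε → φ₀ x = 1)
    (hdef2 : ∀ x : ℝ, ε < |x| → |x| ≤ ε * q → φ₀ x = η |x|)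
    (hdef3 : ∀ x : ℝ, ε * q < |x| → φ₀ x = 0)
    (φ : ℕ → ℝ → ℝ) (hφ0 : φ 0 = φ₀)
    (hrec : ∀ m : ℕ, ∀ x : ℝ, φ (m + 1) x = φ m x - q ^ (-(m + 1 : ℤ)) * φ m (x / q))
    (ψ : ℝ → ℝ) (hψ : ∀ x : ℝ, Tendsto (fun m => φ m x) atTop (nhds (ψ x))) :
    ∀ x : ℝ,
      ψ x = (∏' m : ℕ, (1 - q ^ (-(m + 1) : ℤ))) +
        ∑' ℓ : ℕ,
          ((1 / ∏ k ∈ Finset.Icc 1 ℓ, (1 - q ^ k)) * η (|x| / q ^ ℓ) -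
              ∑ k ∈ Finset.range (ℓ + 1), 1 / ∏ j ∈ Finset.Icc 1 k, (1 - q ^ j)) *
            Set.indicator (Set.Ioc (ε * q ^ ℓ) (ε * q ^ (ℓ + 1))) (fun _ => (1 : ℝ)) |x| := by
  have hzpow (m : ℕ) : q ^ (-(m + 1 : ℤ)) = q⁻¹ ^ (m + 1) := by
    rw [inv_pow, ← zpow_natCast, ← zpow_neg]; push_cast; rfl
  have hrec' (m : ℕ) (x : ℝ) : φ (m + 1) x = φ m x - q⁻¹ ^ (m + 1) * φ m (x / q) := by
    rw [hrec, hzpow]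
  simp_rw [hzpow]
  intro x
  have hlim : Tendsto (fun m => ∑ j ∈ Finset.range (m + 1),
      dilationCoeff q⁻¹ m j * φ₀ (x / q ^ j)) atTop (nhds (ψ x)) :=
    (hψ x).congr fun m => by rw [eq_sum_dilationCoeff hrec' m x, hφ0]
  rcases le_or_gt |x| ε with hcore | hshell
  · have hone (j : ℕ) : φ₀ (x / q ^ j) = 1 := hdef1 _ <| by
      rw [abs_div, abs_of_pos (pow_pos (zero_lt_one.trans hq) j)]
      exact (div_le_self (abs_nonneg x) (one_le_pow₀ hq.le)).trans hcore
    have hout (ℓ : ℕ) : |x| ∉ Set.Ioc (ε * q ^ ℓ) (ε * q ^ (ℓ + 1)) := fun h =>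
      h.1.not_ge (hcore.trans (le_mul_of_one_le_right hε.le (one_le_pow₀ hq.le)))
    simp only [Set.indicator_of_notMem (hout _), mul_zero, tsum_zero, add_zero]
    simpa [hone, hdef1 x hcore] using tendsto_nhds_unique hlim
      (tendsto_sum_dilationCoeff_inv_mul hq (ℓ := 0) (by simp) fun j _ => hone j)
  · obtain ⟨ℓ, hℓ⟩ := exists_mem_Ioc_mul_pow hq hε hshell
    obtain ⟨h_lt, h_eq, h_gt⟩ :=
      apply_div_pow_of_abs_mem_Ioc hq.le hε.le hdef1 hdef2 hdef3 hℓ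
    rw [tsum_mul_indicator_of_mem (pairwise_disjoint_Ioc_mul_pow hq.le hε.le) _ hℓ, ← h_eq]
    exact tendsto_nhds_unique hlim (tendsto_sum_dilationCoeff_inv_mul hq h_lt h_gt)

/-- explicit formula for the limit function `ψ` (Theorem `construction`). -/
theorem stmt_10 (q : ℝ) (hq : 1 < q) (ε : ℝ) (hε : 0 < ε) (η : ℝ → ℝ) (φ₀ : ℝ → ℝ)
    (hdef1 : ∀ x : ℝ, |x| ≤ ε → φ₀ x = 1)
    (hdef2 : ∀ x : ℝ, ε < |x| → |x| ≤ ε * q → φ₀ x = η |x|)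
    (hdef3 : ∀ x : ℝ, ε * q < |x| → φ₀ x = 0)
    (hsmooth : ContDiff ℝ (⊤ : ℕ∞) φ₀)
    (φ : ℕ → ℝ → ℝ) (hφ0 : φ 0 = φ₀)
    (hrec : ∀ m : ℕ, ∀ x : ℝ, φ (m + 1) x = φ m x - q ^ (-(m + 1 : ℤ)) * φ m (x / q))
    (ψ : ℝ → ℝ) (hψ : ∀ x : ℝ, Tendsto (fun m => φ m x) atTop (nhds (ψ x))) :
    ∀ x : ℝ,
      ψ x = (∏' m : ℕ, (1 - q ^ (-(m + 1) : ℤ))) +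
        ∑' ℓ : ℕ,
          ((1 / ∏ k ∈ Finset.Icc 1 ℓ, (1 - q ^ k)) * η (|x| / q ^ ℓ) -
              ∑ k ∈ Finset.range (ℓ + 1), 1 / ∏ j ∈ Finset.Icc 1 k, (1 - q ^ j)) *
            Set.indicator (Set.Ioc (ε * q ^ ℓ) (ε * q ^ (ℓ + 1))) (fun _ => (1 : ℝ)) |x| :=
  stmt_10_general q hq ε hε η φ₀ hdef1 hdef2 hdef3 φ hφ0 hrec ψ hψ
end

section
/- Let 0 < q < 1 and n ∈ ℕ. Then | ∏_{k=1}^∞ (1 − q^k) − 1 − Σ_{m=1}^{n} (−1)^m (q^{m(3m−1)/2} + q^{m(3m+1)/2}) | ≤ 2 · q^{(n+1)(3n+2)/2}. -/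
/-!
Mathlib proves the pentagonal number theorem in any topological ring, given summability and
multipliability hypotheses; for `0 ≤ x < 1` these all follow from comparison with the geometric
series `∑ xⁿ`. Grouping the terms of indices `m` and `-m`, the series
`1 - ∏ (1 - xᵏ) = ∑_{m ≥ 1} (-1)^(m-1) (x^(m(3m-1)/2) + x^(m(3m+1)/2))` is alternating with
decreasing terms, so a partial sum differs from the limit by at most the first omitted term,
`x^((n+1)(3n+2)/2) + x^((n+1)(3n+4)/2) ≤ 2 x^((n+1)(3n+2)/2)`.
-/

open Filter Topology Finset

lemma pentagonal_natCast_add_one (k : ℕ) :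
    pentagonal ((k : ℤ) + 1) = (k + 1) * (3 * k + 2) / 2 := by
  grind [pentagonal_def]

lemma pentagonal_neg_natCast (k : ℕ) : pentagonal (-(k : ℤ)) = k * (3 * k + 1) / 2 := by
  grind [pentagonal_neg]

theorem Antitone.abs_sub_alternating_series_le {E : Type*} [Ring E] [LinearOrder E]
    [IsOrderedRing E] [TopologicalSpace E] [OrderClosedTopology E] {l : E} {f : ℕ → E}
    (hfl : Tendsto (fun n => ∑ i ∈ range n, (-1) ^ i * f i) atTop (𝓝 l)) (hfa : Antitone f)
    (n : ℕ) : |l - ∑ i ∈ range n, (-1) ^ i * f i| ≤ f n := by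
  obtain ⟨k, rfl | rfl⟩ := n.even_or_odd'
  · have lo := hfa.alternating_series_le_tendsto hfl k
    have hi := hfa.tendsto_le_alternating_series hfl k
    rw [sum_range_succ, pow_mul, neg_one_sq, one_pow, one_mul] at hi
    rw [abs_of_nonneg (sub_nonneg.2 lo)]
    exact sub_le_iff_le_add'.2 hi
  · have lo := hfa.alternating_series_le_tendsto hfl (k + 1)
    have hi := hfa.tendsto_le_alternating_series hfl k
    rw [show 2 * (k + 1) = 2 * k + 1 + 1 by ring, sum_range_succ, pow_succ, pow_mul, neg_one_sq,
      one_pow, one_mul, neg_one_mul, ← sub_eq_add_neg] at lo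
    rw [abs_sub_comm, abs_of_nonneg (sub_nonneg.2 hi)]
    exact sub_le_comm.2 lo

def pentagonalPair {R : Type*} [Semiring R] (x : R) (m : ℕ) : R :=
  x ^ (m * (3 * m - 1) / 2) + x ^ (m * (3 * m + 1) / 2)

/-- Mathlib's form of the series pairs the terms of indices `-k` and `k + 1`; this regroups a
partial sum into the pairs of indices `±m`. -/
lemma sum_range_pentagonal_eq {R : Type*} [CommRing R] (x : R) (N : ℕ) :
    ∑ k ∈ range (N + 1),
        (-1) ^ k * (x ^ (k * (3 * k + 1) / 2) - x ^ ((k + 1) * (3 * k + 2) / 2)) =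
      1 - ∑ i ∈ range N, (-1) ^ i * pentagonalPair x (i + 1) +
        (-1) ^ (N + 1) * x ^ ((N + 1) * (3 * N + 2) / 2) := by
  induction N with
  | zero => simp [sub_eq_add_neg]
  | succ N ih =>
    rw [sum_range_succ, ih, sum_range_succ, pentagonalPair]
    have e1 : 3 * (N + 1) - 1 = 3 * N + 2 := by omega
    have e2 : (N + 1) * (3 * (N + 1) + 1) = (N + 1) * (3 * N + 4) := by ring
    have e3 : (N + 1 + 1) * (3 * (N + 1) + 2) = (N + 1 + 1) * (3 * N + 5) := by ring
    rw [e1, e2, e3]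
    ring

section Real

variable {x : ℝ}

lemma prod_one_sub_pow_mem_Icc (hx0 : 0 ≤ x) (hx1 : x ≤ 1) (s : Finset ℕ) (e : ℕ → ℕ) :
    ∏ i ∈ s, (1 - x ^ e i) ∈ Set.Icc 0 1 := by
  have h : ∀ i ∈ s, 0 ≤ 1 - x ^ e i ∧ 1 - x ^ e i ≤ 1 := fun i _ =>
    ⟨sub_nonneg.2 (pow_le_one₀ hx0 hx1), sub_le_self _ (pow_nonneg hx0 _)⟩
  exact ⟨prod_nonneg fun i hi => (h i hi).1,
    prod_le_one (fun i hi => (h i hi).1) fun i hi => (h i hi).2⟩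

lemma pow_mul_prod_one_sub_pow_mem_Icc (hx0 : 0 ≤ x) (hx1 : x ≤ 1) (k n : ℕ) :
    x ^ ((k + 1) * n) * ∏ i ∈ range (n + 1), (1 - x ^ (k + i + 1)) ∈ Set.Icc 0 (x ^ n) := by
  obtain ⟨h0, h1⟩ := prod_one_sub_pow_mem_Icc hx0 hx1 (range (n + 1)) (fun i => k + i + 1)
  refine ⟨mul_nonneg (pow_nonneg hx0 _) h0, ?_⟩
  calc x ^ ((k + 1) * n) * ∏ i ∈ range (n + 1), (1 - x ^ (k + i + 1))
      ≤ x ^ ((k + 1) * n) := mul_le_of_le_one_right (pow_nonneg hx0 _) h1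
    _ ≤ x ^ n := pow_le_pow_of_le_one hx0 hx1 (Nat.le_mul_of_pos_left n k.succ_pos)

lemma summable_pentagonal_of_nonneg_of_lt_one (hx0 : 0 ≤ x) (hx1 : x < 1) :
    Summable fun k : ℕ =>
      (-1 : ℝ) ^ k * (x ^ (k * (3 * k + 1) / 2) - x ^ ((k + 1) * (3 * k + 2) / 2)) := by
  refine (summable_geometric_of_lt_one hx0 hx1).of_norm_bounded fun k => ?_
  have h1 : k ≤ k * (3 * k + 1) / 2 :=
    (Nat.le_div_iff_mul_le two_pos).2 (by nlinarith [Nat.le_mul_self k])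
  have h2 : k * (3 * k + 1) / 2 ≤ (k + 1) * (3 * k + 2) / 2 := Nat.div_le_div_right (by nlinarith)
  have h3 := pow_le_pow_of_le_one hx0 hx1.le h1
  have h4 := pow_le_pow_of_le_one hx0 hx1.le h2
  have h5 := pow_nonneg hx0 ((k + 1) * (3 * k + 2) / 2)
  rw [norm_mul, norm_pow, norm_neg, norm_one, one_pow, one_mul, Real.norm_of_nonneg (by linarith)]
  linarith

theorem hasSum_pentagonal_of_nonneg_of_lt_one (hx0 : 0 ≤ x) (hx1 : x < 1) :
    HasSum (fun k : ℕ =>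
        (-1 : ℝ) ^ k * (x ^ (k * (3 * k + 1) / 2) - x ^ ((k + 1) * (3 * k + 2) / 2)))
      (∏' n, (1 - x ^ (n + 1))) := by
  have hgeom := summable_geometric_of_lt_one hx0 hx1
  have hterm := pow_mul_prod_one_sub_pow_mem_Icc hx0 hx1.le
  have hsum (k : ℕ) :
      Summable fun n => x ^ ((k + 1) * n) * ∏ i ∈ range (n + 1), (1 - x ^ (k + i + 1)) :=
    hgeom.of_nonneg_of_le (fun n => (hterm k n).1) fun n => (hterm k n).2
  have hmult (k : ℕ) : Multipliable fun n => 1 - x ^ (n + k + 1) := by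
    simpa [sub_eq_add_neg, add_assoc] using Real.multipliable_one_add_of_summable
      (((summable_nat_add_iff (k + 1)).2 hgeom).neg)
  have htail : Tendsto (fun k => (-1 : ℝ) ^ (k + 1) * x ^ ((k + 1) * (3 * k + 4) / 2) *
      ∑' n, x ^ ((k + 1) * n) * ∏ i ∈ range (n + 1), (1 - x ^ (k + i + 1))) atTop (𝓝 0) := by
    refine squeeze_zero_norm (a := fun k => x ^ k * (1 - x)⁻¹) (fun k => ?_)
      (by simpa using (tendsto_pow_atTop_nhds_zero_of_lt_one hx0 hx1).mul_const (1 - x)⁻¹)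
    have hexp : k ≤ (k + 1) * (3 * k + 4) / 2 :=
      (Nat.le_div_iff_mul_le two_pos).2 (by nlinarith)
    have htsum : ∑' n, x ^ ((k + 1) * n) * ∏ i ∈ range (n + 1), (1 - x ^ (k + i + 1)) ∈
        Set.Icc 0 (1 - x)⁻¹ :=
      ⟨tsum_nonneg fun n => (hterm k n).1,
        tsum_geometric_of_lt_one hx0 hx1 ▸ (hsum k).tsum_le_tsum (fun n => (hterm k n).2) hgeom⟩
    rw [norm_mul, norm_mul, norm_pow, norm_neg, norm_one, one_pow, one_mul,
      Real.norm_of_nonneg (pow_nonneg hx0 _), Real.norm_of_nonneg htsum.1]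
    exact mul_le_mul (pow_le_pow_of_le_one hx0 hx1.le hexp) htsum.2 htsum.1 (pow_nonneg hx0 _)
  have hrhs := summable_pentagonal_of_nonneg_of_lt_one hx0 hx1
  have h := Pentagonal.tprod_one_sub_pow (tendsto_pow_atTop_nhds_zero_of_lt_one hx0 hx1) hsum
    hmult (by simpa only [pentagonal_natCast_add_one, pentagonal_neg_natCast] using hrhs) htail
  simp only [pentagonal_natCast_add_one, pentagonal_neg_natCast] at h
  exact h ▸ hrhs.hasSum

lemma pentagonalPair_antitone (hx0 : 0 ≤ x) (hx1 : x ≤ 1) : Antitone (pentagonalPair x) :=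
  fun _ _ h => add_le_add (pow_le_pow_of_le_one hx0 hx1 (by gcongr))
    (pow_le_pow_of_le_one hx0 hx1 (by gcongr))

lemma pentagonalPair_le (hx0 : 0 ≤ x) (hx1 : x ≤ 1) (m : ℕ) :
    pentagonalPair x m ≤ 2 * x ^ (m * (3 * m - 1) / 2) := by
  have h : x ^ (m * (3 * m + 1) / 2) ≤ x ^ (m * (3 * m - 1) / 2) :=
    pow_le_pow_of_le_one hx0 hx1 (by gcongr; omega)
  rw [pentagonalPair]
  linarith

lemma tendsto_sum_range_pentagonalPair (hx0 : 0 ≤ x) (hx1 : x < 1) :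
    Tendsto (fun N => ∑ i ∈ range N, (-1) ^ i * pentagonalPair x (i + 1)) atTop
      (𝓝 (1 - ∏' n, (1 - x ^ (n + 1)))) := by
  have hpartial := (tendsto_add_atTop_iff_nat 1).2
    (hasSum_pentagonal_of_nonneg_of_lt_one hx0 hx1).tendsto_sum_nat
  have hlast : Tendsto (fun N => (-1 : ℝ) ^ (N + 1) * x ^ ((N + 1) * (3 * N + 2) / 2)) atTop
      (𝓝 0) := by
    refine squeeze_zero_norm (fun N => ?_) (tendsto_pow_atTop_nhds_zero_of_lt_one hx0 hx1)
    rw [norm_mul, norm_pow, norm_neg, norm_one, one_pow, one_mul, norm_pow,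
      Real.norm_of_nonneg hx0]
    exact pow_le_pow_of_le_one hx0 hx1.le ((Nat.le_div_iff_mul_le two_pos).2 (by nlinarith))
  simpa [sum_range_pentagonal_eq] using
    (tendsto_const_nhds (x := (1 : ℝ))).sub (hpartial.sub hlast)

end Real

/-- tail estimate for Euler's pentagonal number series. -/
theorem stmt_16 (q : ℝ) (hq0 : 0 < q) (hq1 : q < 1) (n : ℕ) :
    |(∏' k : ℕ, (1 - q ^ (k + 1))) - 1 -
        ∑ m ∈ Finset.Icc 1 n,
          (-1 : ℝ) ^ m * (q ^ (m * (3 * m - 1) / 2) + q ^ (m * (3 * m + 1) / 2))| ≤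
      2 * q ^ ((n + 1) * (3 * n + 2) / 2) := by
  have hshift : ∑ m ∈ Icc 1 n, (-1 : ℝ) ^ m * pentagonalPair q m =
      -∑ i ∈ range n, (-1) ^ i * pentagonalPair q (i + 1) := by
    rw [← Ico_add_one_right_eq_Icc, sum_Ico_eq_sum_range]
    simp only [Nat.add_sub_cancel, add_comm 1, pow_succ, mul_neg_one, neg_mul, sum_neg_distrib]
  have hexp : (n + 1) * (3 * (n + 1) - 1) / 2 = (n + 1) * (3 * n + 2) / 2 := by
    rw [show 3 * (n + 1) - 1 = 3 * n + 2 by omega]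
  have halt := ((pentagonalPair_antitone hq0.le hq1.le).comp_monotone
    fun _ _ => Nat.succ_le_succ).abs_sub_alternating_series_le
    (tendsto_sum_range_pentagonalPair hq0.le hq1) n
  change |_ - 1 - ∑ m ∈ Icc 1 n, (-1 : ℝ) ^ m * pentagonalPair q m| ≤ _
  calc _ = |(1 - ∏' k : ℕ, (1 - q ^ (k + 1))) -
          ∑ i ∈ range n, (-1) ^ i * pentagonalPair q (i + 1)| := by
        rw [hshift, ← abs_neg]
        congr 1
        ring
    _ ≤ pentagonalPair q (n + 1) := halt
    _ ≤ 2 * q ^ ((n + 1) * (3 * n + 2) / 2) := hexp ▸ pentagonalPair_le hq0.le hq1.le (n + 1)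
end
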